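/- arXiv:2307.11461 — 2 statements merged into one kernel-verified Lean document; each statement's English description precedes it below -/
import Mathlib

section
/- The only F_2-linear map f : V → V satisfying (1) f∘f = m∘Δ, (2) m∘(f⊗id) = m∘(id⊗f) = f∘m, (3) (f⊗id)∘Δ = (id⊗f)∘Δ = Δ∘f, and (4) f is filtered with respect to the quantum grading shifted by 1 (i.e., f(1) ∈ span{1,x} and f(x) ∈ span{x}, where q(1)=1, q(x)=-1), is the identity map f = id_V. -/
open TensorProduct

abbrev F2 := ZMod 2
abbrev V := F2 × F2

/-- basis element `1` -/
def e1 : V := (1, 0)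
/-- basis element `x` -/
def ex : V := (0, 1)
/-- a = 1 + x -/
def a : V := e1 + ex
/-- b = x -/
def b : V := ex

/-- Bar-Natan multiplication as a bilinear map. -/
def mB : V →ₗ[F2] V →ₗ[F2] V :=
  LinearMap.mk₂ F2 (fun u v => (u.1 * v.1, u.1 * v.2 + u.2 * v.1 + u.2 * v.2))
    (by intro u u' v; apply Prod.ext <;> simp <;> ring)
    (by intro c u v; apply Prod.ext <;> simp <;> ring)
    (by intro u v v'; apply Prod.ext <;> simp <;> ring)
    (by intro c u v; apply Prod.ext <;> simp <;> ring)

/-- Bar-Natan multiplication m : V ⊗ V → V. -/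
noncomputable def mm : V ⊗[F2] V →ₗ[F2] V := TensorProduct.lift mB

/-- Bar-Natan comultiplication Δ : V → V ⊗ V,
Δ(1) = 1⊗x + x⊗1 + 1⊗1, Δ(x) = x⊗x. -/
noncomputable def Δ : V →ₗ[F2] V ⊗[F2] V :=
  (LinearMap.fst F2 F2 F2).smulRight (e1 ⊗ₜ ex + ex ⊗ₜ e1 + e1 ⊗ₜ e1)
    + (LinearMap.snd F2 F2 F2).smulRight (ex ⊗ₜ ex)

/-- counit η : V → F₂, η(1)=0, η(x)=1. -/
def η : V →ₗ[F2] F2 := LinearMap.snd F2 F2 F2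

/-- unit ι : F₂ → V. -/
def ιu : F2 →ₗ[F2] V := LinearMap.toSpanSingleton F2 V e1

/-!
Compatibility of `f` with the multiplication forces `f` to be multiplication by `u = f 1`.
Over `F₂` the Bar-Natan algebra `F₂[x]/(x² - x)` is Boolean, so `u * u = u`; on the other
hand `m ∘ Δ = id`, so `f` is an involution and `u = u * u = f (f 1) = 1`.
-/

theorem apply_eq_of_lift_comp_rTensor_eq {R M : Type*} [CommSemiring R] [AddCommMonoid M]
    [Module R M] (μ : M →ₗ[R] M →ₗ[R] M) {e : M}
    (he : ∀ v, μ e v = v) {f : M →ₗ[R] M}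
    (hf : (TensorProduct.lift μ).comp (f.rTensor M) = f.comp (TensorProduct.lift μ)) (v : M) :
    f v = μ (f e) v := by
  simpa [he] using (LinearMap.congr_fun hf (e ⊗ₜ v)).symm

theorem mB_e1_left (v : V) : mB e1 v = v := by
  ext <;> simp [mB, e1]

theorem mB_self (u : V) : mB u u = u := by
  ext <;> simp [mB] <;> decide +revert

theorem mm_comp_Δ : mm.comp Δ = LinearMap.id := by
  ext <;> simp [mm, mB, Δ, e1, ex]; decide

theorem barNatan_unique_one_one_bifurcation_general (f : V →ₗ[F2] V)
    (h1 : f.comp f = mm.comp Δ)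
    (h2a : mm.comp (LinearMap.rTensor V f) = f.comp mm) :
    f = LinearMap.id := by
  have hmul : ∀ v, f v = mB (f e1) v := apply_eq_of_lift_comp_rTensor_eq mB mB_e1_left h2a
  have hinv : ∀ v, f (f v) = v := by
    simpa [mm_comp_Δ] using LinearMap.congr_fun h1
  have hunit : f e1 = e1 :=
    calc f e1 = mB (f e1) (f e1) := (mB_self _).symm
      _ = f (f e1) := (hmul _).symm
      _ = e1 := hinv e1
  refine LinearMap.ext fun v => ?_
  rw [hmul, hunit, mB_e1_left, LinearMap.id_apply]

/-- The only F₂-linear map f : V → V satisfying f∘f = m∘Δ, the compatibility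
conditions with m and Δ, and the filtration condition (f(x) ∈ span{x}),
is the identity. -/
theorem barNatan_unique_one_one_bifurcation (f : V →ₗ[F2] V)
    (h1 : f.comp f = mm.comp Δ)
    (h2a : mm.comp (LinearMap.rTensor V f) = f.comp mm)
    (h2b : mm.comp (LinearMap.lTensor V f) = f.comp mm)
    (h3a : (LinearMap.rTensor V f).comp Δ = Δ.comp f)
    (h3b : (LinearMap.lTensor V f).comp Δ = Δ.comp f)
    (h4 : f ex ∈ Submodule.span F2 {ex}) :
    f = LinearMap.id :=
  barNatan_unique_one_one_bifurcation_general f h1 h2a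
end

section
/- If F : C → C' is a filtered quasi-isomorphism of filtration degree d between finite-dimensional filtered chain complexes over F_2 (i.e., F(F_q C) ⊆ F_{q+d} C' and F induces an isomorphism on homology), then s_min(C') ≥ s_min(C) + d and s_max(C') ≥ s_max(C) + d. -/
/-!
A cycle of `C` in `𝓕 q` that is not a boundary is carried by `F` to a cycle of `C'` in
`𝓕' (q + δ)` that is still not a boundary, since `F` is injective on homology. If every class
of `C` has a representative in `𝓕 q`, then, since `F` is surjective on homology, every class of
`C'` is the image of such a class and so has the representative `F w ∈ 𝓕' (q + δ)`. Hence both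
sets of levels defining `s_min` and `s_max` are shifted by `δ` into the corresponding sets for
`C'`. These are bounded above: the filtration of `C'` is eventually zero, and since `H(C') ≠ 0`
a level at which `H(𝓕' q) → H(C')` is onto is one at which it is nonzero.
-/

section Levels

variable {R M : Type*} [Ring R] [AddCommGroup M] [Module R M]

/-- The levels `q` at which `H(𝓕 q) → H(M)` is surjective; `s_min` is their supremum. -/
def spanningLevels (d : M →ₗ[R] M) (𝓕 : ℤ → Submodule R M) : Set ℤ :=
  {q | ∀ z : M, d z = 0 → ∃ w ∈ 𝓕 q, d w = 0 ∧ z - w ∈ LinearMap.range d}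

/-- The levels `q` at which `H(𝓕 q) → H(M)` is nonzero; `s_max` is their supremum. -/
def essentialLevels (d : M →ₗ[R] M) (𝓕 : ℤ → Submodule R M) : Set ℤ :=
  {q | ∃ z ∈ 𝓕 q, d z = 0 ∧ z ∉ LinearMap.range d}

variable {d : M →ₗ[R] M} {𝓕 : ℤ → Submodule R M} {q : ℤ}

theorem mem_spanningLevels_of_eq_top (h : 𝓕 q = ⊤) : q ∈ spanningLevels d 𝓕 :=
  fun z hz => ⟨z, h ▸ Submodule.mem_top, hz, by simp⟩

theorem mem_essentialLevels_of_eq_top (h : 𝓕 q = ⊤)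
    (hH : ∃ z : M, d z = 0 ∧ z ∉ LinearMap.range d) : q ∈ essentialLevels d 𝓕 :=
  let ⟨z, hz, hzr⟩ := hH
  ⟨z, h ▸ Submodule.mem_top, hz, hzr⟩

theorem spanningLevels_subset_essentialLevels
    (hH : ∃ z : M, d z = 0 ∧ z ∉ LinearMap.range d) :
    spanningLevels d 𝓕 ⊆ essentialLevels d 𝓕 := by
  intro q hq
  obtain ⟨z, hz, hzr⟩ := hH
  obtain ⟨w, hw, hwd, hzw⟩ := hq z hz
  refine ⟨w, hw, hwd, fun hwr => hzr ?_⟩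
  simpa using add_mem hzw hwr

theorem essentialLevels_bddAbove (h : ∃ B : ℤ, ∀ q ≥ B, 𝓕 q = ⊥) :
    BddAbove (essentialLevels d 𝓕) := by
  obtain ⟨B, hB⟩ := h
  refine ⟨B, fun q ⟨z, hz, _, hzr⟩ => ?_⟩
  by_contra! hq
  rw [hB q hq.le, Submodule.mem_bot] at hz
  exact hzr (hz ▸ zero_mem _)

end Levels

section FilteredChainMap

variable {R M M' : Type*} [Ring R] [AddCommGroup M] [Module R M] [AddCommGroup M'] [Module R M']
  {d : M →ₗ[R] M} {d' : M' →ₗ[R] M'} {𝓕 : ℤ → Submodule R M} {𝓕' : ℤ → Submodule R M'}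
  {F : M →ₗ[R] M'} {δ : ℤ} {q : ℤ}

theorem map_cycle_of_comp_eq (hchain : F.comp d = d'.comp F) {z : M} (hz : d z = 0) :
    d' (F z) = 0 := by
  rw [← LinearMap.comp_apply, ← hchain, LinearMap.comp_apply, hz, map_zero]

theorem add_mem_spanningLevels_of_surjective_on_homology (hchain : F.comp d = d'.comp F)
    (hfilt : ∀ q : ℤ, ∀ z ∈ 𝓕 q, F z ∈ 𝓕' (q + δ))
    (hsurj : ∀ z' : M', d' z' = 0 → ∃ z : M, d z = 0 ∧ z' - F z ∈ LinearMap.range d')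
    (hq : q ∈ spanningLevels d 𝓕) : q + δ ∈ spanningLevels d' 𝓕' := by
  intro z' hz'
  obtain ⟨z, hz, b, hb⟩ := hsurj z' hz'
  obtain ⟨w, hw, hwd, a, ha⟩ := hq z hz
  refine ⟨F w, hfilt q w hw, map_cycle_of_comp_eq hchain hwd, b + F a, ?_⟩
  have hFa : d' (F a) = F (z - w) := ha ▸ (LinearMap.congr_fun hchain a).symm
  rw [map_add, hb, hFa, map_sub]
  abel

theorem add_mem_essentialLevels_of_injective_on_homology (hchain : F.comp d = d'.comp F)
    (hfilt : ∀ q : ℤ, ∀ z ∈ 𝓕 q, F z ∈ 𝓕' (q + δ))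
    (hinj : ∀ z : M, d z = 0 → F z ∈ LinearMap.range d' → z ∈ LinearMap.range d)
    (hq : q ∈ essentialLevels d 𝓕) : q + δ ∈ essentialLevels d' 𝓕' := by
  obtain ⟨z, hz, hzd, hzr⟩ := hq
  exact ⟨F z, hfilt q z hz, map_cycle_of_comp_eq hchain hzd, fun h => hzr (hinj z hzd h)⟩

end FilteredChainMap

theorem csSup_add_le_csSup_of_forall_add_mem {α : Type*} [ConditionallyCompleteLattice α]
    [AddGroup α] [AddRightMono α] {S T : Set α} {δ : α} (hS : S.Nonempty) (hT : BddAbove T)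
    (h : ∀ q ∈ S, q + δ ∈ T) : sSup S + δ ≤ sSup T :=
  le_sub_iff_add_le.mp <| csSup_le hS fun q hq => le_sub_iff_add_le.mpr (le_csSup hT (h q hq))

theorem s_invariants_under_filtered_quasi_iso_general
    (C C' : Type*) [AddCommGroup C] [Module F2 C]
    [AddCommGroup C'] [Module F2 C']
    (d : C →ₗ[F2] C)
    (d' : C' →ₗ[F2] C')
    (𝓕 : ℤ → Submodule F2 C) (𝓕' : ℤ → Submodule F2 C')
    (hexh : ∃ A : ℤ, ∀ q ≤ A, 𝓕 q = ⊤) (hbdd' : ∃ B : ℤ, ∀ q ≥ B, 𝓕' q = ⊥)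
    (hH : ∃ z : C, d z = 0 ∧ z ∉ LinearMap.range d)
    (F : C →ₗ[F2] C') (hchain : F.comp d = d'.comp F)
    (δ : ℤ) (hfilt : ∀ q : ℤ, ∀ z ∈ 𝓕 q, F z ∈ 𝓕' (q + δ))
    -- F induces an injection on homology
    (hinj : ∀ z : C, d z = 0 → F z ∈ LinearMap.range d' → z ∈ LinearMap.range d)
    -- F induces a surjection on homology
    (hsurj : ∀ z' : C', d' z' = 0 →
      ∃ z : C, d z = 0 ∧ z' - F z ∈ LinearMap.range d') :
    sSup {q : ℤ | ∀ z : C, d z = 0 →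
        ∃ w ∈ 𝓕 q, d w = 0 ∧ z - w ∈ LinearMap.range d} + δ
      ≤ sSup {q : ℤ | ∀ z' : C', d' z' = 0 →
        ∃ w ∈ 𝓕' q, d' w = 0 ∧ z' - w ∈ LinearMap.range d'} ∧
    sSup {q : ℤ | ∃ z ∈ 𝓕 q, d z = 0 ∧ z ∉ LinearMap.range d} + δ
      ≤ sSup {q : ℤ | ∃ z ∈ 𝓕' q, d' z = 0 ∧ z ∉ LinearMap.range d'} := by
  change sSup (spanningLevels d 𝓕) + δ ≤ sSup (spanningLevels d' 𝓕') ∧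
    sSup (essentialLevels d 𝓕) + δ ≤ sSup (essentialLevels d' 𝓕')
  obtain ⟨A, hA⟩ := hexh
  have hH' : ∃ z' : C', d' z' = 0 ∧ z' ∉ LinearMap.range d' := by
    obtain ⟨z, hz, hzr⟩ := hH
    exact ⟨F z, map_cycle_of_comp_eq hchain hz, fun h => hzr (hinj z hz h)⟩
  have hbdd : BddAbove (essentialLevels d' 𝓕') := essentialLevels_bddAbove hbdd'
  exact ⟨csSup_add_le_csSup_of_forall_add_mem ⟨A, mem_spanningLevels_of_eq_top (hA A le_rfl)⟩
      (hbdd.mono (spanningLevels_subset_essentialLevels hH'))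
      fun q => add_mem_spanningLevels_of_surjective_on_homology hchain hfilt hsurj,
    csSup_add_le_csSup_of_forall_add_mem ⟨A, mem_essentialLevels_of_eq_top (hA A le_rfl) hH⟩ hbdd
      fun q => add_mem_essentialLevels_of_injective_on_homology hchain hfilt hinj⟩

/-- If F : C → C' is a filtered quasi-isomorphism of filtration degree δ
between finite-dimensional filtered chain complexes over F₂ (with nonzero
homology), then s_min(C') ≥ s_min(C) + δ and s_max(C') ≥ s_max(C) + δ.
As in `smin_le_smax`, s_min(D) = sSup {q | every cycle of D is homologous to a
cycle in 𝓕 q} and s_max(D) = sSup {q | some cycle in 𝓕 q is not a boundary}. -/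
theorem s_invariants_under_filtered_quasi_iso
    (C C' : Type*) [AddCommGroup C] [Module F2 C] [FiniteDimensional F2 C]
    [AddCommGroup C'] [Module F2 C'] [FiniteDimensional F2 C']
    (d : C →ₗ[F2] C) (hd : d.comp d = 0)
    (d' : C' →ₗ[F2] C') (hd' : d'.comp d' = 0)
    (𝓕 : ℤ → Submodule F2 C) (𝓕' : ℤ → Submodule F2 C')
    (hanti : ∀ q : ℤ, 𝓕 (q + 1) ≤ 𝓕 q) (hanti' : ∀ q : ℤ, 𝓕' (q + 1) ≤ 𝓕' q)
    (hsub : ∀ q : ℤ, ∀ z ∈ 𝓕 q, d z ∈ 𝓕 q)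
    (hsub' : ∀ q : ℤ, ∀ z ∈ 𝓕' q, d' z ∈ 𝓕' q)
    (hexh : ∃ A : ℤ, ∀ q ≤ A, 𝓕 q = ⊤) (hbdd : ∃ B : ℤ, ∀ q ≥ B, 𝓕 q = ⊥)
    (hexh' : ∃ A : ℤ, ∀ q ≤ A, 𝓕' q = ⊤) (hbdd' : ∃ B : ℤ, ∀ q ≥ B, 𝓕' q = ⊥)
    (hH : ∃ z : C, d z = 0 ∧ z ∉ LinearMap.range d)
    (F : C →ₗ[F2] C') (hchain : F.comp d = d'.comp F)
    (δ : ℤ) (hfilt : ∀ q : ℤ, ∀ z ∈ 𝓕 q, F z ∈ 𝓕' (q + δ))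
    -- F induces an injection on homology
    (hinj : ∀ z : C, d z = 0 → F z ∈ LinearMap.range d' → z ∈ LinearMap.range d)
    -- F induces a surjection on homology
    (hsurj : ∀ z' : C', d' z' = 0 →
      ∃ z : C, d z = 0 ∧ z' - F z ∈ LinearMap.range d') :
    sSup {q : ℤ | ∀ z : C, d z = 0 →
        ∃ w ∈ 𝓕 q, d w = 0 ∧ z - w ∈ LinearMap.range d} + δ
      ≤ sSup {q : ℤ | ∀ z' : C', d' z' = 0 →
        ∃ w ∈ 𝓕' q, d' w = 0 ∧ z' - w ∈ LinearMap.range d'} ∧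
    sSup {q : ℤ | ∃ z ∈ 𝓕 q, d z = 0 ∧ z ∉ LinearMap.range d} + δ
      ≤ sSup {q : ℤ | ∃ z ∈ 𝓕' q, d' z = 0 ∧ z ∉ LinearMap.range d'} :=
  s_invariants_under_filtered_quasi_iso_general C C' d d' 𝓕 𝓕' hexh hbdd' hH F hchain δ hfilt hinj
    hsurj
end
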